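/- arXiv:2302.09614 — 2 statements merged into one kernel-verified Lean document; each statement's English description precedes it below -/
import Mathlib

section
/- In a 3-connected graph G, if three edges e1, e2, e3 form a path of length 3 (a chain v1-v2-v3-v4 with distinct vertices), then there exists a simple cycle of G containing all three edges. -/
/-
Removing `v2` and `v3` leaves a connected graph, so there is a path from `v4` to `v1`
avoiding both. Prepending the edges `v2v3` and `v3v4` gives a path from `v2` to `v1`, and
the edge `v1v2` closes it into a cycle; that edge is new because `v2` appears only at the
start of the path.
-/

/-- `G` is `k`-vertex-connected: more than `k` vertices and no set of fewer than `k`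
vertices disconnects it. -/
def IsKConnected {V : Type*} [Fintype V] (G : SimpleGraph V) (k : ℕ) : Prop :=
  k + 1 ≤ Fintype.card V ∧
    ∀ S : Finset V, S.card < k → (G.induce (↑S : Set V)ᶜ).Connected

open SimpleGraph Walk

lemma SimpleGraph.Preconnected.exists_isPath_support_subset {V : Type*} {G : SimpleGraph V}
    {s : Set V} (hs : (G.induce s).Preconnected) {u v : V} (hu : u ∈ s) (hv : v ∈ s) :
    ∃ p : G.Walk u v, p.IsPath ∧ ∀ x ∈ p.support, x ∈ s := by
  classical
  obtain ⟨w⟩ := hs ⟨u, hu⟩ ⟨v, hv⟩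
  let f : G.induce s ↪g G := Embedding.induce s
  have hsupp : ∀ x ∈ (w.toPath.1.map f.toHom).support, x ∈ s := by
    simp only [Walk.support_map, List.mem_map]
    rintro _ ⟨x, -, rfl⟩
    exact x.2
  exact ⟨_, w.toPath.2.map (f := f.toHom) f.injective, hsupp⟩

lemma IsKConnected.exists_isPath_avoiding {V : Type*} [Fintype V] {G : SimpleGraph V}
    {k : ℕ} (hG : IsKConnected G k) {S : Finset V} (hS : S.card < k) {u v : V}
    (hu : u ∉ S) (hv : v ∉ S) :
    ∃ p : G.Walk u v, p.IsPath ∧ ∀ x ∈ S, x ∉ p.support := by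
  obtain ⟨p, hp, hpS⟩ :=
    (hG.2 S hS).preconnected.exists_isPath_support_subset (s := (↑S : Set V)ᶜ) hu hv
  exact ⟨p, hp, fun x hxS hx => hpS x hx hxS⟩

/-- In a 3-connected graph, three edges forming a path `v1-v2-v3-v4` with distinct
vertices lie on a common simple cycle. -/
theorem cycle_through_chain {V : Type*} [Fintype V]
    (G : SimpleGraph V) (h3 : IsKConnected G 3)
    (v1 v2 v3 v4 : V)
    (h12 : G.Adj v1 v2) (h23 : G.Adj v2 v3) (h34 : G.Adj v3 v4)
    (hdist : List.Pairwise (· ≠ ·) [v1, v2, v3, v4]) :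
    ∃ (w : V) (c : G.Walk w w), c.IsCycle ∧
      s(v1, v2) ∈ c.edges ∧ s(v2, v3) ∈ c.edges ∧ s(v3, v4) ∈ c.edges := by
  classical
  obtain ⟨h13, h14, h24⟩ : v1 ≠ v3 ∧ v1 ≠ v4 ∧ v2 ≠ v4 := by simp_all
  have hcard : ({v2, v3} : Finset V).card < 3 :=
    Finset.card_le_two.trans_lt (by norm_num)
  obtain ⟨p, hp, hpS⟩ := h3.exists_isPath_avoiding hcard (u := v4) (v := v1)
    (by simp [h24.symm, h34.ne.symm]) (by simp [h12.ne, h13])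
  have hv2 : v2 ∉ p.support := hpS v2 (by simp)
  let q : G.Walk v2 v1 := cons h23 (cons h34 p)
  have hq : q.IsPath := (hp.cons (hpS v3 (by simp))).cons (by simp [h23.ne, hv2])
  have h12q : s(v1, v2) ∉ q.edges := by
    simp only [q, edges_cons, List.mem_cons]
    rintro (h | h | h)
    · simp [h12.ne, h13] at h
    · simp [h13, h14] at h
    · exact hv2 (p.snd_mem_support_of_mem_edges h)
  exact ⟨v1, cons h12 q, (cons_isCycle_iff q h12).2 ⟨hq, h12q⟩, by simp [q]⟩
end

section
/- In a 2-connected graph G in which the pair {a,b} is a 2-vertex-cut, let H be one of the split subgraphs with respect to {a,b} (a connected component of G minus {a,b} together with a, b and the edges to them, excluding any edge (a,b)). Then for every vertex x of H other than a and b, there exists a simple path from a to b within H passing through x. -/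
namespace SimpleGraph

variable {β : Type*} {H : SimpleGraph β}

namespace Walk

theorem IsPath.append_of_support_inter {u v w : β} {p : H.Walk u v} {q : H.Walk v w}
    (hp : p.IsPath) (hq : q.IsPath) (h : ∀ y ∈ p.support, y ∈ q.support → y = v) :
    (p.append q).IsPath := by
  rw [isPath_def, support_append, List.nodup_append]
  refine ⟨hp.support_nodup, hq.support_nodup.tail, ?_⟩
  rintro y hyp _ hyq rfl
  obtain rfl := h y hyp (List.mem_of_mem_tail hyq)
  have hnd := hq.support_nodup
  rw [← q.cons_tail_support] at hnd
  exact (List.nodup_cons.mp hnd).1 hyq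

theorem IsPath.eq_of_mem_support_append {u v w y : β} {p : H.Walk u v} {q : H.Walk v w}
    (hpq : (p.append q).IsPath) (hp : y ∈ p.support) (hq : y ∈ q.support) : y = v := by
  by_contra hyv
  exact hpq.ne_of_mem_support_of_append hyv hp hq rfl

theorem IsPath.replace_middle {a s t b : β} {A : H.Walk a s} {M : H.Walk s t}
    {C : H.Walk t b} (hP : (A.append (M.append C)).IsPath) (hst : s ≠ t) {Q : H.Walk s t}
    (hQ : Q.IsPath) (hQP : ∀ y ∈ Q.support, y ∈ (A.append (M.append C)).support → y = s ∨ y = t) :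
    (A.append (Q.append C)).IsPath := by
  have hMC := hP.of_append_right
  have htA : t ∉ A.support := fun ht =>
    hst (hP.eq_of_mem_support_append ht (by simp [mem_support_append_iff])).symm
  have hsC : s ∉ C.support := fun hs => hst (hMC.eq_of_mem_support_append M.start_mem_support hs)
  refine hP.of_append_left.append_of_support_inter
    (hQ.append_of_support_inter hMC.of_append_right fun y hyQ hyC => ?_) fun y hyA hy => ?_
  · rcases hQP y hyQ (by simp [mem_support_append_iff, hyC]) with rfl | rfl
    exacts [absurd hyC hsC, rfl]
  · rcases (mem_support_append_iff _ _).mp hy with hyQ | hyC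
    · rcases hQP y hyQ (by simp [mem_support_append_iff, hyA]) with rfl | rfl
      exacts [rfl, absurd hyA htA]
    · exact hP.eq_of_mem_support_append hyA (by simp [mem_support_append_iff, hyC])

theorem IsPath.exists_isPath_support_subset_of_ear {a b u v : β} {P : H.Walk a b}
    (hP : P.IsPath) (hu : u ∈ P.support) (hv : v ∈ P.support) (huv : u ≠ v) {Q : H.Walk u v}
    (hQ : Q.IsPath) (hQP : ∀ y ∈ Q.support, y ∈ P.support → y = u ∨ y = v) :
    ∃ P' : H.Walk a b, P'.IsPath ∧ Q.support ⊆ P'.support := by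
  obtain ⟨P₁, P₂, hP₁, hP₂, rfl⟩ := hP.mem_support_iff_exists_append.mp hu
  rcases (mem_support_append_iff _ _).mp hv with hv₁ | hv₂
  · obtain ⟨L₁, L₂, -, -, rfl⟩ := hP₁.mem_support_iff_exists_append.mp hv₁
    rw [← append_assoc] at hP hQP
    refine ⟨L₁.append (Q.reverse.append P₂), hP.replace_middle huv.symm hQ.reverse ?_, ?_⟩
    · intro y hy hyP
      exact (hQP y (by simpa using hy) hyP).symm
    · intro y hy
      simp [mem_support_append_iff, hy]
  · obtain ⟨R₁, R₂, -, -, rfl⟩ := hP₂.mem_support_iff_exists_append.mp hv₂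
    exact ⟨P₁.append (Q.append R₂), hP.replace_middle huv hQ hQP,
      fun y hy => by simp [mem_support_append_iff, hy]⟩

theorem IsPath.exists_isPath_mem_support_of_adj {a b w x z : β} {P : H.Walk a b}
    (hP : P.IsPath) (hw : w ∈ P.support) (hwx : H.Adj w x) (hz : z ∈ P.support) (hzw : z ≠ w)
    (q : H.Walk x z) (hq : ∀ y ∈ q.support, y ∈ P.support → y = z) :
    ∃ P' : H.Walk a b, P'.IsPath ∧ x ∈ P'.support := by
  classical
  have hwq : w ∉ q.bypass.support := fun h =>
    hzw (hq w (q.support_bypass_subset_support h) hw).symm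
  obtain ⟨P', hP', hsub⟩ := hP.exists_isPath_support_subset_of_ear hw hz hzw.symm
    (Q := cons hwx q.bypass) (q.bypass_isPath.cons hwq) fun y hy hyP => by
      rcases List.mem_cons.mp hy with rfl | hy
      exacts [Or.inl rfl, Or.inr (hq y (q.support_bypass_subset_support hy) hyP)]
  exact ⟨P', hP', hsub (by simp)⟩

end Walk

def IsFanned (H : SimpleGraph β) (a b x : β) : Prop :=
  ∀ T : Set β, a ∈ T → b ∈ T → x ∉ T → ∀ w ∈ T,
    ∃ z ∈ T, z ≠ w ∧ ∃ q : H.Walk x z, ∀ y ∈ q.support, y ∈ T → y = z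

theorem exists_isPath_mem_support_of_isFanned {a b : β}
    (hfan : ∀ y, y ≠ a → y ≠ b → H.IsFanned a b y) {x : β} (hxa : x ≠ a) (hxb : x ≠ b) :
    ∃ P : H.Walk a b, P.IsPath ∧ x ∈ P.support := by
  classical
  have step : ∀ {y x}, H.Adj y x → (∃ P : H.Walk a b, P.IsPath ∧ y ∈ P.support) →
      ∃ P : H.Walk a b, P.IsPath ∧ x ∈ P.support := by
    rintro y x hyx ⟨P, hP, hy⟩
    by_cases hxP : x ∈ P.support
    · exact ⟨P, hP, hxP⟩
    have hxa : x ≠ a := fun h => hxP (h ▸ P.start_mem_support)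
    have hxb : x ≠ b := fun h => hxP (h ▸ P.end_mem_support)
    obtain ⟨z, hz, hzy, q, hq⟩ := hfan x hxa hxb {v | v ∈ P.support} P.start_mem_support
      P.end_mem_support hxP y hy
    exact hP.exists_isPath_mem_support_of_adj hy hyx hz hzy q hq
  have along : ∀ {y x} (p : H.Walk y x), (∃ P : H.Walk a b, P.IsPath ∧ y ∈ P.support) →
      ∃ P : H.Walk a b, P.IsPath ∧ x ∈ P.support := by
    intro y x p
    induction p with
    | nil => exact id
    | cons h _ ih => exact fun hy => ih (step h hy)
  have hxT : x ∉ ({a, b} : Set β) := by simp [hxa, hxb]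
  obtain ⟨za, hza, hzab, qa, -⟩ := hfan x hxa hxb {a, b} (by simp) (by simp) hxT b (by simp)
  obtain ⟨zb, hzb, hzba, qb, -⟩ := hfan x hxa hxb {a, b} (by simp) (by simp) hxT a (by simp)
  obtain rfl : za = a := by simpa [hzab] using hza
  obtain rfl : zb = b := by simpa [hzba] using hzb
  exact along qa.reverse ⟨_, (qa.reverse.append qb).bypass_isPath, Walk.start_mem_support _⟩

end SimpleGraph

open SimpleGraph

theorem IsKConnected.exists_walk_not_mem_support {V : Type*} [Fintype V] {G : SimpleGraph V}
    {k : ℕ} (hG : IsKConnected G k) (hk : 1 < k) {w u v : V} (hu : u ≠ w) (hv : v ≠ w) :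
    ∃ p : G.Walk u v, w ∉ p.support := by
  obtain ⟨p⟩ := (hG.2 {w} (by simpa using hk)).preconnected ⟨u, by simpa using hu⟩
    ⟨v, by simpa using hv⟩
  let q : G.Walk u v := p.map (Embedding.induce _).toHom
  refine ⟨q, fun hw => ?_⟩
  obtain ⟨t, -, htw⟩ := List.mem_map.mp (p.support_map _ ▸ hw)
  exact t.2 (by simpa using htw)

abbrev splitSubgraph {V : Type*} (G : SimpleGraph V) (a b : V) (K : Set V) :
    SimpleGraph ({a, b} ∪ K : Set V) :=
  (G.deleteEdges {s(a, b)}).induce ({a, b} ∪ K)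

section Split

variable {V : Type*} {G : SimpleGraph V} {a b : V} {K : Set V}

theorem splitSubgraph_adj_of_mem {u v : V} (hKa : a ∉ K) (hKb : b ∉ K) (hu : u ∈ K)
    (hv : v ∈ ({a, b} ∪ K : Set V)) (huv : G.Adj u v) :
    (splitSubgraph G a b K).Adj ⟨u, Or.inr hu⟩ ⟨v, hv⟩ := by
  refine ⟨huv, fun ⟨h, _⟩ => ?_⟩
  rcases Sym2.eq_iff.mp h with ⟨hua, -⟩ | ⟨hub, -⟩
  exacts [hKa (hua ▸ hu), hKb (hub ▸ hu)]

theorem mem_pair_union_of_adj (hKmax : ∀ x ∈ K, ∀ y, G.Adj x y → y ≠ a → y ≠ b → y ∈ K)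
    {u v : V} (hu : u ∈ K) (huv : G.Adj u v) : v ∈ ({a, b} ∪ K : Set V) := by
  by_cases hva : v = a
  · exact Or.inl (Or.inl hva)
  by_cases hvb : v = b
  · exact Or.inl (Or.inr hvb)
  exact Or.inr (hKmax u hu v huv hva hvb)

theorem exists_splitSubgraph_walk_to_first_mem (hKa : a ∉ K) (hKb : b ∉ K)
    (hKmax : ∀ x ∈ K, ∀ y, G.Adj x y → y ≠ a → y ≠ b → y ∈ K)
    {T : Set ({a, b} ∪ K : Set V)} (hT : ∀ t ∉ T, t.1 ∈ K) {u y : V} (p : G.Walk u y)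
    (hu : u ∈ K) (hy : y ∉ K) (huT : ⟨u, Or.inr hu⟩ ∉ T) :
    ∃ z ∈ T, z.1 ∈ p.support ∧ ∃ q : (splitSubgraph G a b K).Walk ⟨u, Or.inr hu⟩ z,
      ∀ v ∈ q.support, v ∈ T → v = z := by
  induction p with
  | nil => exact absurd hu hy
  | @cons u m y huv p ih =>
    have hm := mem_pair_union_of_adj hKmax hu huv
    have hadj := splitSubgraph_adj_of_mem hKa hKb hu hm huv
    by_cases hmT : ⟨m, hm⟩ ∈ T
    · refine ⟨_, hmT, by simp, .cons hadj .nil, fun v hv hvT => ?_⟩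
      rcases List.mem_cons.mp hv with rfl | hv
      exacts [absurd hvT huT, List.mem_singleton.mp hv]
    obtain ⟨z, hzT, hzp, q, hq⟩ := ih (hT _ hmT) hy hmT
    refine ⟨z, hzT, List.mem_cons_of_mem _ hzp, .cons hadj q, fun v hv hvT => ?_⟩
    rcases List.mem_cons.mp hv with rfl | hv
    exacts [absurd hvT huT, hq v hv hvT]

theorem isFanned_splitSubgraph [Fintype V] (h2 : IsKConnected G 2) (hab : a ≠ b)
    (hKa : a ∉ K) (hKb : b ∉ K) (hKmax : ∀ x ∈ K, ∀ y, G.Adj x y → y ≠ a → y ≠ b → y ∈ K)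
    {x : V} (hx : x ∈ K) :
    (splitSubgraph G a b K).IsFanned ⟨a, Or.inl (Or.inl rfl)⟩ ⟨b, Or.inl (Or.inr rfl)⟩
      ⟨x, Or.inr hx⟩ := by
  intro T haT hbT hxT w hwT
  have hT : ∀ t ∉ T, t.1 ∈ K := by
    rintro ⟨t, (rfl | rfl) | ht⟩ htT
    exacts [absurd haT htT, absurd hbT htT, ht]
  obtain ⟨t, htw, htK⟩ : ∃ t, t ≠ w.1 ∧ t ∉ K := by
    by_cases hwa : w.1 = a
    · exact ⟨b, by rw [hwa]; exact hab.symm, hKb⟩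
    · exact ⟨a, Ne.symm hwa, hKa⟩
  have hxw : x ≠ w.1 := by
    rintro rfl
    exact hxT hwT
  obtain ⟨p, hp⟩ := h2.exists_walk_not_mem_support one_lt_two hxw htw
  obtain ⟨z, hzT, hzp, q, hq⟩ :=
    exists_splitSubgraph_walk_to_first_mem hKa hKb hKmax hT p hx htK hxT
  exact ⟨z, hzT, fun h => hp (h ▸ hzp), q, hq⟩

end Split

/-- In a 2-connected graph with separation pair `{a,b}`, let `K` be (the vertex set
of) a connected component of `G` minus `{a,b}` and let `H` be the corresponding
split subgraph: the subgraph induced on `K ∪ {a,b}` with the edge `(a,b)` removed.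
Then every vertex `x ∈ K` lies on some simple `a`-`b` path inside `H`. -/
theorem path_through_vertex_in_split_subgraph {V : Type*} [Fintype V]
    (G : SimpleGraph V) (h2 : IsKConnected G 2)
    (a b : V) (hab : a ≠ b)
    (K : Set V) (hKa : a ∉ K) (hKb : b ∉ K)
    (hKmax : ∀ x ∈ K, ∀ y, G.Adj x y → y ≠ a → y ≠ b → y ∈ K)
    (x : V) (hx : x ∈ K) :
    ∃ p : ((G.deleteEdges {s(a, b)}).induce ({a, b} ∪ K)).Walk
        ⟨a, by simp⟩ ⟨b, by simp⟩,
      p.IsPath ∧ (⟨x, by exact Or.inr hx⟩ : ({a, b} ∪ K : Set V)) ∈ p.support := by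
  have hK : ∀ y : ({a, b} ∪ K : Set V), y ≠ ⟨a, by simp⟩ → y ≠ ⟨b, by simp⟩ → y.1 ∈ K := by
    rintro ⟨y, (rfl | rfl) | hy⟩ hya hyb
    exacts [absurd rfl hya, absurd rfl hyb, hy]
  exact exists_isPath_mem_support_of_isFanned
    (fun y hya hyb => isFanned_splitSubgraph h2 hab hKa hKb hKmax (hK y hya hyb))
    (fun h => hKa (Subtype.mk.inj h ▸ hx)) (fun h => hKb (Subtype.mk.inj h ▸ hx))
end
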